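/- arXiv:2204.12458 — 3 statements merged into one kernel-verified Lean document; each statement's English description precedes it below -/
import Mathlib

section
/- There is no function f from complete state-only datasets to value functions that recovers the optimal value function of every finite MDP: there exist two finite MDPs M₁ and M₂ (over the same state set) with identical complete state-only datasets D_{M₁} = D_{M₂} but different optimal value functions V*_{M₁} ≠ V*_{M₂}. -/
/-- `p` is a valid joint transition/reward probability kernel for a finite MDP. -/
def IsKernel {S A Rw : Type*} [Fintype S] [Fintype A] [Fintype Rw]
    (p : S → A → S → Rw → ℝ) : Prop :=
  (∀ s a s' r, 0 ≤ p s a s' r) ∧ ∀ s a, ∑ s' : S, ∑ r : Rw, p s a s' r = 1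

/-- `V` satisfies the Bellman optimality equation (characterizing `V*` for
`0 ≤ γ < 1`). -/
def IsOptimalValue {S A Rw : Type*} [Fintype S] [Fintype A] [Nonempty A] [Fintype Rw]
    (p : S → A → S → Rw → ℝ) (rv : Rw → ℝ) (γ : ℝ) (V : S → ℝ) : Prop :=
  ∀ s : S, V s = Finset.univ.sup' Finset.univ_nonempty
    (fun a : A => ∑ s' : S, ∑ r : Rw, p s a s' r * (rv r + γ * V s'))

/-- The complete state-only dataset of an MDP: all triples `(s, s', r)` that occur
with positive probability under some action. -/
def Dataset {S A Rw : Type*} (p : S → A → S → Rw → ℝ) : S → S → Rw → Prop :=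
  fun s s' r => ∃ a : A, 0 < p s a s' r

/-!
The complete state-only dataset only records which transitions are possible, not how likely
they are. Take a deterministic MDP in which `s₁` can either go to `s₂` (reward `0`) or straight
to the terminal state (reward `1`), while `s₂` always reaches the terminal state with reward `1`.
Replacing the second action of `s₁` by the mixture `0.9 • (s₂, 0) + 0.1 • (terminal, 1)` keeps
the set of possible transitions, hence the dataset, but lowers `V*(s₁)` from `1` to `0.91`.
-/

variable {S A Rw : Type*}

theorem not_exists_recovery_of_dataset_eq [Fintype S] [Fintype A] [Nonempty A] [Fintype Rw]
    {rv : Rw → ℝ} {γ : ℝ} {p₁ p₂ : S → A → S → Rw → ℝ} {V₁ V₂ : S → ℝ}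
    (hp₁ : IsKernel p₁) (hp₂ : IsKernel p₂) (hD : Dataset p₁ = Dataset p₂)
    (hV₁ : IsOptimalValue p₁ rv γ V₁) (hV₂ : IsOptimalValue p₂ rv γ V₂) (hV : V₁ ≠ V₂) :
    ¬ ∃ f : (S → S → Rw → Prop) → (S → ℝ), ∀ p : S → A → S → Rw → ℝ, IsKernel p →
      ∀ V : S → ℝ, IsOptimalValue p rv γ V → f (Dataset p) = V := by
  rintro ⟨f, hf⟩
  exact hV <| (hf p₁ hp₁ V₁ hV₁).symm.trans <| hD ▸ hf p₂ hp₂ V₂ hV₂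

theorem Fin.sup'_univ_two {α : Type*} [SemilatticeSup α] (f : Fin 2 → α) :
    Finset.univ.sup' Finset.univ_nonempty f = f 0 ⊔ f 1 :=
  eq_of_forall_ge_iff fun a => by simp [Finset.sup'_le_iff, Fin.forall_fin_two]

section PointMass

variable [DecidableEq S] [DecidableEq Rw]

def pointMass (x : S × Rw) (s' : S) (r : Rw) : ℝ := if (s', r) = x then 1 else 0

theorem pointMass_nonneg (x : S × Rw) (s' : S) (r : Rw) : 0 ≤ pointMass x s' r := by
  unfold pointMass; split_ifs <;> norm_num

theorem pointMass_pos_iff {x : S × Rw} {s' : S} {r : Rw} :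
    0 < pointMass x s' r ↔ (s', r) = x := by
  unfold pointMass; split_ifs <;> simp_all

theorem sum_pointMass_mul [Fintype S] [Fintype Rw] (x : S × Rw) (g : S → Rw → ℝ) :
    ∑ s', ∑ r, pointMass x s' r * g s' r = g x.1 x.2 := by
  rw [← Fintype.sum_prod_type' (f := fun s' r => pointMass x s' r * g s' r)]
  simp [pointMass]

theorem isKernel_pointMass [Fintype S] [Fintype A] [Fintype Rw] (next : S → A → S × Rw) :
    IsKernel fun s a => pointMass (next s a) :=
  ⟨fun _ _ => pointMass_nonneg _, fun s a => by simpa using sum_pointMass_mul (next s a) 1⟩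

variable {a b : ℝ} {x y : S × Rw}

theorem mul_pointMass_add_mul_pointMass_nonneg (ha : 0 ≤ a) (hb : 0 ≤ b) (s' : S) (r : Rw) :
    0 ≤ a * pointMass x s' r + b * pointMass y s' r :=
  add_nonneg (mul_nonneg ha (pointMass_nonneg x s' r)) (mul_nonneg hb (pointMass_nonneg y s' r))

theorem mul_pointMass_add_mul_pointMass_pos_iff (ha : 0 < a) (hb : 0 < b) {s' : S} {r : Rw} :
    0 < a * pointMass x s' r + b * pointMass y s' r ↔ (s', r) = x ∨ (s', r) = y := by
  unfold pointMass; split_ifs <;> simp_all; positivity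

theorem sum_mul_pointMass_add_mul_pointMass_mul [Fintype S] [Fintype Rw] (g : S → Rw → ℝ) :
    ∑ s', ∑ r, (a * pointMass x s' r + b * pointMass y s' r) * g s' r =
      a * g x.1 x.2 + b * g y.1 y.2 := by
  simp only [add_mul, mul_assoc, Finset.sum_add_distrib, ← Finset.mul_sum, sum_pointMass_mul]

end PointMass

namespace Counterexample

/-- The states `0`, `1`, `2` are `s₁`, `s₂`, `s_t`; an outcome is a pair (next state, reward). -/
def step : Fin 3 → Fin 2 → Fin 3 × Fin 2
  | 0, 0 => (1, 0)
  | 0, 1 => (2, 1)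
  | 1, _ => (2, 1)
  | 2, _ => (2, 0)

def mdp₁ : Fin 3 → Fin 2 → Fin 3 → Fin 2 → ℝ := fun s a => pointMass (step s a)

noncomputable def mdp₂ : Fin 3 → Fin 2 → Fin 3 → Fin 2 → ℝ := fun s a s' r =>
  if s = 0 ∧ a = 1 then 0.9 * pointMass (1, 0) s' r + 0.1 * pointMass (2, 1) s' r
  else pointMass (step s a) s' r

theorem isKernel_mdp₁ : IsKernel mdp₁ := isKernel_pointMass step

theorem sum_mdp₂_mul (s : Fin 3) (a : Fin 2) (g : Fin 3 → Fin 2 → ℝ) :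
    ∑ s', ∑ r, mdp₂ s a s' r * g s' r =
      if s = 0 ∧ a = 1 then 0.9 * g 1 0 + 0.1 * g 2 1 else g (step s a).1 (step s a).2 := by
  unfold mdp₂; split_ifs
  · exact sum_mul_pointMass_add_mul_pointMass_mul g
  · exact sum_pointMass_mul _ g

theorem isKernel_mdp₂ : IsKernel mdp₂ := by
  refine ⟨fun s a s' r => ?_, fun s a => ?_⟩
  · unfold mdp₂; split_ifs
    · exact mul_pointMass_add_mul_pointMass_nonneg (by norm_num) (by norm_num) s' r
    · exact pointMass_nonneg _ _ _
  · have total := sum_mdp₂_mul s a 1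
    simp only [Pi.one_apply, mul_one] at total
    rw [total]; split_ifs <;> norm_num

theorem dataset_mdp₁_eq_dataset_mdp₂ : Dataset mdp₁ = Dataset mdp₂ := by
  funext s s' r
  simp only [Dataset, Fin.exists_fin_two, mdp₁, mdp₂]
  fin_cases s <;>
    simp (disch := norm_num) [step, pointMass_pos_iff, mul_pointMass_add_mul_pointMass_pos_iff]

def value₁ : Fin 3 → ℝ := ![1, 1, 0]

noncomputable def value₂ : Fin 3 → ℝ := ![0.91, 1, 0]

theorem isOptimalValue_mdp₁ :
    IsOptimalValue mdp₁ (fun r : Fin 2 => ((r : ℕ) : ℝ)) 0.9 value₁ := by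
  intro s
  simp only [Fin.sup'_univ_two, mdp₁, sum_pointMass_mul]
  fin_cases s <;> simp [step, value₁]; norm_num

theorem isOptimalValue_mdp₂ :
    IsOptimalValue mdp₂ (fun r : Fin 2 => ((r : ℕ) : ℝ)) 0.9 value₂ := by
  intro s
  simp only [Fin.sup'_univ_two, sum_mdp₂_mul]
  fin_cases s <;> simp [step, value₂]; norm_num

theorem value₁_ne_value₂ : value₁ ≠ value₂ := fun h => by
  norm_num [value₁, value₂] at h

end Counterexample

/-- No function from complete state-only datasets to value functions recovers the
optimal value function of every finite MDP: there exist two finite MDPs (here on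
states `Fin 3`, actions `Fin 2`, reward values `Fin 2` valued as `0` and `1`,
discount `0.9`) with identical complete state-only datasets but different optimal
value functions. -/
theorem no_function_recovers_optimal_values_from_state_only_data :
    (¬ ∃ f : (Fin 3 → Fin 3 → Fin 2 → Prop) → (Fin 3 → ℝ),
        ∀ p : Fin 3 → Fin 2 → Fin 3 → Fin 2 → ℝ, IsKernel p →
          ∀ V : Fin 3 → ℝ, IsOptimalValue p (fun r => ((r : ℕ) : ℝ)) 0.9 V →
            f (Dataset p) = V) ∧
    ∃ (p₁ p₂ : Fin 3 → Fin 2 → Fin 3 → Fin 2 → ℝ) (V₁ V₂ : Fin 3 → ℝ),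
      IsKernel p₁ ∧ IsKernel p₂ ∧ Dataset p₁ = Dataset p₂ ∧
      IsOptimalValue p₁ (fun r => ((r : ℕ) : ℝ)) 0.9 V₁ ∧
      IsOptimalValue p₂ (fun r => ((r : ℕ) : ℝ)) 0.9 V₂ ∧ V₁ ≠ V₂ := by
  open Counterexample in
  exact ⟨not_exists_recovery_of_dataset_eq isKernel_mdp₁ isKernel_mdp₂
      dataset_mdp₁_eq_dataset_mdp₂ isOptimalValue_mdp₁ isOptimalValue_mdp₂ value₁_ne_value₂,
    mdp₁, mdp₂, value₁, value₂, isKernel_mdp₁, isKernel_mdp₂, dataset_mdp₁_eq_dataset_mdp₂,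
    isOptimalValue_mdp₁, isOptimalValue_mdp₂, value₁_ne_value₂⟩
end

section
/- Potential-based reward shaping preserves optimal policies: for a finite MDP M with reward r and any function Φ: S → ℝ, the shaped MDP M' with reward r'(s,a,s') = r(s,a,s') + γΦ(s') − Φ(s) satisfies Q*_{M'}(s,a) = Q*_M(s,a) − Φ(s) for all s, a; in particular the argmax over actions of Q*_{M'}(s,·) equals that of Q*_M(s,·) at every state. -/
lemma sup'_abs_bound {A : Type*} [Fintype A] [Nonempty A] (f g : A → ℝ) :
    |Finset.univ.sup' Finset.univ_nonempty f - Finset.univ.sup' Finset.univ_nonempty g|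
      ≤ Finset.univ.sup' Finset.univ_nonempty (fun a => |f a - g a|) := by
  rw [abs_sub_le_iff]
  constructor
  · rw [sub_le_iff_le_add]
    apply Finset.sup'_le
    intro a _
    have h1 : g a ≤ Finset.univ.sup' Finset.univ_nonempty g := Finset.le_sup' g (Finset.mem_univ a)
    have h2 : |f a - g a| ≤ Finset.univ.sup' Finset.univ_nonempty (fun a => |f a - g a|) :=
      Finset.le_sup' (fun a => |f a - g a|) (Finset.mem_univ a)
    have h3 := le_abs_self (f a - g a)
    linarith
  · rw [sub_le_iff_le_add]
    apply Finset.sup'_le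
    intro a _
    have h1 : f a ≤ Finset.univ.sup' Finset.univ_nonempty f := Finset.le_sup' f (Finset.mem_univ a)
    have h2 : |f a - g a| ≤ Finset.univ.sup' Finset.univ_nonempty (fun a => |f a - g a|) :=
      Finset.le_sup' (fun a => |f a - g a|) (Finset.mem_univ a)
    have h3 := neg_abs_le (f a - g a)
    linarith

lemma sup'_sub_const {A : Type*} [Fintype A] [Nonempty A] (f : A → ℝ) (c : ℝ) :
    Finset.univ.sup' Finset.univ_nonempty (fun a => f a - c)
      = Finset.univ.sup' Finset.univ_nonempty f - c := by
  apply le_antisymm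
  · apply Finset.sup'_le
    intro a _
    have : f a ≤ Finset.univ.sup' Finset.univ_nonempty f := Finset.le_sup' f (Finset.mem_univ a)
    linarith
  · rw [sub_le_iff_le_add]
    apply Finset.sup'_le
    intro a _
    have : f a - c ≤ Finset.univ.sup' Finset.univ_nonempty (fun a => f a - c) :=
      Finset.le_sup' (fun a => f a - c) (Finset.mem_univ a)
    linarith

/-- `Q` satisfies the Bellman optimality equation for the finite MDP with
transition kernel `p`, reward function `r` and discount `γ` (characterizing
`Q*` for `0 ≤ γ < 1`). -/
def IsOptimalQ {S A : Type*} [Fintype S] [Fintype A] [Nonempty A]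
    (p : S → A → S → ℝ) (r : S → A → S → ℝ) (γ : ℝ) (Q : S → A → ℝ) : Prop :=
  ∀ s a, Q s a = ∑ s' : S, p s a s' *
    (r s a s' + γ * Finset.univ.sup' Finset.univ_nonempty (fun a' : A => Q s' a'))

/-- Potential-based reward shaping preserves optimal policies: for any potential
`Φ : S → ℝ`, the MDP with shaped reward `r'(s,a,s') = r(s,a,s') + γΦ(s') − Φ(s)`
has `Q*_{M'}(s,a) = Q*_M(s,a) − Φ(s)`, so the set of greedy (argmax) actions of
`Q*_{M'}(s,·)` equals that of `Q*_M(s,·)` at every state. -/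
theorem potential_shaping_preserves_optimal_policy
    {S A : Type*} [Fintype S] [Fintype A] [Nonempty A]
    (p : S → A → S → ℝ) (r : S → A → S → ℝ) (γ : ℝ) (Φ : S → ℝ)
    (hγ0 : 0 ≤ γ) (hγ1 : γ < 1)
    (hp0 : ∀ s a s', 0 ≤ p s a s') (hp1 : ∀ s a, ∑ s' : S, p s a s' = 1)
    (Q Q' : S → A → ℝ)
    (hQ : IsOptimalQ p r γ Q)
    (hQ' : IsOptimalQ p (fun s a s' => r s a s' + γ * Φ s' - Φ s) γ Q') :
    (∀ s a, Q' s a = Q s a - Φ s) ∧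
    (∀ s : S, {a : A | ∀ b : A, Q' s b ≤ Q' s a} = {a : A | ∀ b : A, Q s b ≤ Q s a}) := by
  have key : ∀ s a, Q' s a = Q s a - Φ s := by
    rcases isEmpty_or_nonempty S with hS | hS
    · intro s; exact (IsEmpty.false s).elim
    -- the difference function and its sup norm
    set D : S → A → ℝ := fun s a => Q' s a - (Q s a - Φ s) with hD
    have hSA : (Finset.univ : Finset (S × A)).Nonempty := Finset.univ_nonempty
    set M : ℝ := Finset.univ.sup' hSA (fun sa : S × A => |D sa.1 sa.2|) with hM
    have hM0 : 0 ≤ M := by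
      obtain ⟨sa, hsa⟩ := hSA
      exact le_trans (abs_nonneg (D sa.1 sa.2))
        (Finset.le_sup' (fun sa : S × A => |D sa.1 sa.2|) hsa)
    have hDM : ∀ s a, |D s a| ≤ M := fun s a =>
      Finset.le_sup' (fun sa : S × A => |D sa.1 sa.2|) (Finset.mem_univ (s, a))
    -- the per-state value difference is bounded by M
    have hV : ∀ s' : S,
        |Finset.univ.sup' Finset.univ_nonempty (fun a' : A => Q' s' a')
          + Φ s' - Finset.univ.sup' Finset.univ_nonempty (fun a' : A => Q s' a')| ≤ M := by
      intro s'
      have h1 := sup'_abs_bound (fun a' : A => Q' s' a') (fun a' : A => Q s' a' - Φ s')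
      rw [sup'_sub_const] at h1
      have h2 : Finset.univ.sup' Finset.univ_nonempty
          (fun a' : A => |Q' s' a' - (Q s' a' - Φ s')|) ≤ M := by
        apply Finset.sup'_le
        intro a' _
        exact hDM s' a'
      calc |Finset.univ.sup' Finset.univ_nonempty (fun a' : A => Q' s' a')
            + Φ s' - Finset.univ.sup' Finset.univ_nonempty (fun a' : A => Q s' a')|
          = |Finset.univ.sup' Finset.univ_nonempty (fun a' : A => Q' s' a')
            - (Finset.univ.sup' Finset.univ_nonempty (fun a' : A => Q s' a') - Φ s')| := by
            ring_nf
        _ ≤ _ := le_trans h1 h2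
    -- contraction: |D s a| ≤ γ M
    have hcon : ∀ s a, |D s a| ≤ γ * M := by
      intro s a
      have hsum : D s a = γ * ∑ s' : S, p s a s' *
          (Finset.univ.sup' Finset.univ_nonempty (fun a' : A => Q' s' a')
            + Φ s' - Finset.univ.sup' Finset.univ_nonempty (fun a' : A => Q s' a')) := by
        have e1 := hQ' s a
        have e2 := hQ s a
        have e3 := hp1 s a
        simp only [hD]
        rw [e1, e2, Finset.mul_sum]
        rw [show Φ s = ∑ s' : S, p s a s' * Φ s from by rw [← Finset.sum_mul, e3, one_mul]]
        rw [← Finset.sum_sub_distrib, ← Finset.sum_sub_distrib]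
        apply Finset.sum_congr rfl
        intro s' _
        ring
      rw [hsum, abs_mul, abs_of_nonneg hγ0]
      apply mul_le_mul_of_nonneg_left _ hγ0
      calc |∑ s' : S, p s a s' * _| ≤ ∑ s' : S, |p s a s' *
            (Finset.univ.sup' Finset.univ_nonempty (fun a' : A => Q' s' a')
              + Φ s' - Finset.univ.sup' Finset.univ_nonempty (fun a' : A => Q s' a'))| :=
            Finset.abs_sum_le_sum_abs _ _
        _ ≤ ∑ s' : S, p s a s' * M := by
            apply Finset.sum_le_sum
            intro s' _
            rw [abs_mul, abs_of_nonneg (hp0 s a s')]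
            exact mul_le_mul_of_nonneg_left (hV s') (hp0 s a s')
        _ = M := by rw [← Finset.sum_mul, hp1, one_mul]
    -- hence M ≤ γ M, so M = 0
    have hMγ : M ≤ γ * M := by
      apply Finset.sup'_le
      intro sa _
      exact hcon sa.1 sa.2
    have hMzero : M = 0 := by nlinarith
    intro s a
    have h := hDM s a
    rw [hMzero] at h
    have := abs_nonpos_iff.mp h
    simp only [hD] at this
    linarith
  refine ⟨key, fun s => ?_⟩
  ext a
  simp only [Set.mem_setOf_eq, key]
  constructor <;> intro h b <;> have := h b <;> linarith
end

section
/- In a finite MDP, any deterministic stationary policy that is greedy with respect to the optimal value function V* (i.e., at each state selects an action attaining max_a Σ_{s',r} p(s',r|s,a)[r + γV*(s')]) is an optimal policy: its value function equals V*. -/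
/-- In a finite MDP, any deterministic stationary policy `π` that is greedy with
respect to the optimal value function `V*` — at each state `π s` attains
`max_a Σ_{s',r} p(s',r|s,a)[r + γ V*(s')]` — is optimal: its value function
equals `V*`. -/
theorem greedy_policy_is_optimal
    {S A Rw : Type*} [Fintype S] [Fintype A] [Nonempty A] [Fintype Rw]
    (p : S → A → S → Rw → ℝ) (rv : Rw → ℝ) (γ : ℝ)
    (hγ0 : 0 ≤ γ) (hγ1 : γ < 1) (hp : IsKernel p)
    (V : S → ℝ) (hV : IsOptimalValue p rv γ V)
    (π : S → A)
    (hgreedy : ∀ s a, ∑ s' : S, ∑ r : Rw, p s a s' r * (rv r + γ * V s')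
      ≤ ∑ s' : S, ∑ r : Rw, p s (π s) s' r * (rv r + γ * V s')) :
    ∀ Vπ : S → ℝ,
      (∀ s : S, Vπ s = ∑ s' : S, ∑ r : Rw, p s (π s) s' r * (rv r + γ * Vπ s')) →
      Vπ = V := by
  intro Vπ hVπ
  -- V also satisfies the π-Bellman equation since π is greedy
  have hVfix : ∀ s : S, V s = ∑ s' : S, ∑ r : Rw, p s (π s) s' r * (rv r + γ * V s') := by
    intro s
    refine le_antisymm ?_ ?_
    · rw [hV s]
      exact Finset.sup'_le _ _ fun a _ => hgreedy s a
    · rw [hV s]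
      exact Finset.le_sup' (fun a : A => ∑ s' : S, ∑ r : Rw, p s a s' r * (rv r + γ * V s'))
        (Finset.mem_univ (π s))
  cases isEmpty_or_nonempty S with
  | inl h => funext s; exact isEmptyElim s
  | inr h =>
    set Δ : S → ℝ := fun s => |Vπ s - V s| with hΔ
    obtain ⟨M, hM⟩ : ∃ M : S, ∀ s, Δ s ≤ Δ M := Finite.exists_max Δ
    have hkey : Δ M ≤ γ * Δ M := by
      have hdiff : Vπ M - V M
          = γ * ∑ s' : S, ∑ r : Rw, p M (π M) s' r * (Vπ s' - V s') := by
        rw [hVπ M, hVfix M, Finset.mul_sum, ← Finset.sum_sub_distrib]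
        refine Finset.sum_congr rfl fun s' _ => ?_
        rw [Finset.mul_sum, ← Finset.sum_sub_distrib]
        refine Finset.sum_congr rfl fun r _ => ?_
        ring
      have hsum : |∑ s' : S, ∑ r : Rw, p M (π M) s' r * (Vπ s' - V s')| ≤ Δ M := by
        calc |∑ s' : S, ∑ r : Rw, p M (π M) s' r * (Vπ s' - V s')|
            ≤ ∑ s' : S, |∑ r : Rw, p M (π M) s' r * (Vπ s' - V s')| :=
              Finset.abs_sum_le_sum_abs _ _
          _ ≤ ∑ s' : S, ∑ r : Rw, |p M (π M) s' r * (Vπ s' - V s')| :=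
              Finset.sum_le_sum fun s' _ => Finset.abs_sum_le_sum_abs _ _
          _ ≤ ∑ s' : S, ∑ r : Rw, p M (π M) s' r * Δ M := by
              refine Finset.sum_le_sum fun s' _ => Finset.sum_le_sum fun r _ => ?_
              rw [abs_mul, abs_of_nonneg (hp.1 M (π M) s' r)]
              exact mul_le_mul_of_nonneg_left (hM s') (hp.1 M (π M) s' r)
          _ = Δ M := by
              simp_rw [← Finset.sum_mul]
              rw [hp.2 M (π M), one_mul]
      have heq : Δ M = γ * |∑ s' : S, ∑ r : Rw, p M (π M) s' r * (Vπ s' - V s')| := by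
        show |Vπ M - V M| = _
        rw [hdiff, abs_mul, abs_of_nonneg hγ0]
      nth_rewrite 1 [heq]
      exact mul_le_mul_of_nonneg_left hsum hγ0
    have hΔM0 : Δ M ≤ 0 := by nlinarith [abs_nonneg (Vπ M - V M)]
    funext s
    have h1 : Δ s ≤ 0 := (hM s).trans hΔM0
    have h2 : 0 ≤ Δ s := abs_nonneg _
    have : Vπ s - V s = 0 := abs_eq_zero.mp (le_antisymm h1 h2)
    linarith
end
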